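/- arXiv:1808.05845 — 5 statements merged into one kernel-verified Lean document; each statement's English description precedes it below -/
import Mathlib

section
/- If G is a finite group acting doubly transitively on a finite set X, mu : G → ℂ, and f, h : X → ℂ satisfy ∑_{x∈X} f(x) = 0 and ∑_{x∈X} h(x) = 0, then |⟨mu ∗ f, h⟩| ≤ sqrt(|G|/(|X|−1)) · ‖mu‖₂ · ‖f‖₂ · ‖h‖₂, where (mu ∗ f)(x) = ∑_{g∈G} mu(g) f(g⁻¹·x) and ⟨u,v⟩ = ∑_{x∈X} u(x) conj(v(x)). -/
open Finset

/-- Quasi-randomness bound for doubly transitive actions (Proposition 1):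
if a finite group `G` acts doubly transitively on a finite set `X` with at least
two elements, and `f, h : X → ℂ` have mean zero, then
`|⟨μ ∗ f, h⟩| ≤ sqrt(|G|/(|X|-1)) ‖μ‖₂ ‖f‖₂ ‖h‖₂`. -/
theorem quasirandomness_doubly_transitive
    {G X : Type*} [Group G] [Fintype G] [Fintype X] [MulAction G X]
    (hdt : ∀ x₁ y₁ x₂ y₂ : X, x₁ ≠ y₁ → x₂ ≠ y₂ →
      ∃ g : G, g • x₁ = x₂ ∧ g • y₁ = y₂)
    (hX : 2 ≤ Fintype.card X)
    (μ : G → ℂ) (f h : X → ℂ)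
    (hf : ∑ x, f x = 0) (hh : ∑ x, h x = 0) :
    ‖∑ x, (∑ g, μ g * f (g⁻¹ • x)) * (starRingEnd ℂ) (h x)‖ ≤
      Real.sqrt ((Fintype.card G : ℝ) / ((Fintype.card X : ℝ) - 1)) *
        Real.sqrt (∑ g, ‖μ g‖ ^ 2) *
        Real.sqrt (∑ x, ‖f x‖ ^ 2) *
        Real.sqrt (∑ x, ‖h x‖ ^ 2) := by
  classical
  set c := starRingEnd ℂ with hc
  set n := Fintype.card X with hn
  have hn1 : 1 < n := by omega
  obtain ⟨x₀, y₀, hxy₀⟩ : ∃ x y : X, x ≠ y := Fintype.exists_pair_of_one_lt_card hn1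
  -- transitivity
  have htrans : ∀ x x' : X, ∃ g : G, g • x' = x := by
    intro x x'
    obtain ⟨y', hy'⟩ := Fintype.exists_ne_of_one_lt_card hn1 x'
    obtain ⟨y, hy⟩ := Fintype.exists_ne_of_one_lt_card hn1 x
    obtain ⟨g, hg, -⟩ := hdt x' y' x y (Ne.symm hy') (Ne.symm hy)
    exact ⟨g, hg⟩
  -- reindexing sums over X by the action
  have hsum_perm : ∀ (g : G) (φ : X → ℂ), ∑ x, φ (g⁻¹ • x) = ∑ x, φ x := fun g φ =>
    Fintype.sum_equiv (MulAction.toPerm (g⁻¹ : G)) (fun x => φ (g⁻¹ • x)) φ (fun _ => rfl)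
  set B : X → X → ℂ := fun x y => ∑ g : G, f (g⁻¹ • x) * c (f (g⁻¹ • y)) with hB
  have hBeq : ∀ x y x' y' : X, (∃ g : G, g • x' = x ∧ g • y' = y) → B x y = B x' y' := by
    rintro x y x' y' ⟨g₀, h1, h2⟩
    have e1 : g₀⁻¹ • x = x' := by rw [← h1, inv_smul_smul]
    have e2 : g₀⁻¹ • y = y' := by rw [← h2, inv_smul_smul]
    simp only [hB]
    rw [← Equiv.sum_comp (Equiv.mulLeft g₀) (fun g => f (g⁻¹ • x) * c (f (g⁻¹ • y)))]
    refine Finset.sum_congr rfl fun g _ => ?_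
    simp only [Equiv.coe_mulLeft, mul_inv_rev, mul_smul, e1, e2]
  set α := B x₀ x₀ with hα'
  set β := B x₀ y₀ with hβ'
  have hdiag : ∀ x, B x x = α := by
    intro x
    obtain ⟨g, hg⟩ := htrans x x₀
    exact hBeq x x x₀ x₀ ⟨g, hg, hg⟩
  have hoff : ∀ x y, x ≠ y → B x y = β :=
    fun x y hxy => hBeq x y x₀ y₀ (hdt x₀ y₀ x y hxy₀ hxy)
  set F := ∑ x, f x * c (f x) with hF
  set Hc := ∑ x, c (h x) * h x with hHc
  -- diagonal sum
  have hαeq : (n : ℂ) * α = (Fintype.card G : ℂ) * F := by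
    have h1 : ∑ x : X, B x x = (n : ℂ) * α := by
      rw [Finset.sum_congr rfl (fun x _ => hdiag x), Finset.sum_const, Finset.card_univ,
        nsmul_eq_mul, hn]
    have h2 : ∑ x : X, B x x = (Fintype.card G : ℂ) * F := by
      simp only [hB]
      rw [Finset.sum_comm]
      rw [Finset.sum_congr rfl (fun g _ => hsum_perm g (fun x => f x * c (f x)))]
      rw [Finset.sum_const, Finset.card_univ, nsmul_eq_mul, hF]
    rw [← h1, h2]
  -- row sums vanish
  have hrowsum : ∀ x : X, ∑ y : X, B x y = 0 := by
    intro x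
    simp only [hB]
    rw [Finset.sum_comm]
    refine Finset.sum_eq_zero fun g _ => ?_
    rw [← Finset.mul_sum]
    have : (∑ y, c (f (g⁻¹ • y))) = 0 := by
      rw [hsum_perm g (fun y => c (f y)), ← map_sum, hf, map_zero]
    rw [this, mul_zero]
  have hle1 : (1 : ℕ) ≤ n := hn1.le
  have hrow : α + ((n : ℂ) - 1) * β = 0 := by
    have h0 := hrowsum x₀
    rw [← Finset.add_sum_erase _ _ (Finset.mem_univ x₀), Finset.sum_congr rfl
        (fun y hy => hoff x₀ y (Ne.symm (Finset.mem_erase.1 hy).1)),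
      Finset.sum_const, Finset.card_erase_of_mem (Finset.mem_univ x₀), Finset.card_univ,
      nsmul_eq_mul, ← hn] at h0
    have hcast : ((n - 1 : ℕ) : ℂ) = (n : ℂ) - 1 := by
      rw [Nat.cast_sub hle1]; norm_num
    rw [hcast] at h0
    exact h0
  have hnc0 : ((n : ℂ) - 1) ≠ 0 := by
    have hne : ((n - 1 : ℕ) : ℂ) ≠ 0 := Nat.cast_ne_zero.2 (by omega)
    rwa [Nat.cast_sub hle1, Nat.cast_one] at hne
  have key : α - β = (Fintype.card G : ℂ) * F / ((n : ℂ) - 1) := by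
    field_simp
    linear_combination hαeq - hrow
  -- the convolution coefficients
  set A : G → ℂ := fun g => ∑ x, f (g⁻¹ • x) * c (h x) with hA
  have hS : ∑ g, A g * c (A g) = (α - β) * Hc := by
    have hS1 : ∑ g, A g * c (A g) = ∑ x, ∑ y, (c (h x) * h y) * B x y := by
      simp only [hA, hB, map_sum, map_mul, Finset.sum_mul, Finset.mul_sum]
      conv_lhs => rw [Finset.sum_comm]
      conv_lhs => enter [2, y]; rw [Finset.sum_comm]
      conv_lhs => rw [Finset.sum_comm]
      refine Finset.sum_congr rfl fun x _ => Finset.sum_congr rfl fun y _ =>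
        Finset.sum_congr rfl fun g _ => ?_
      simp only [hc, Complex.conj_conj]
      ring
    rw [hS1]
    have hx' : ∀ x : X, ∑ y, (c (h x) * h y) * B x y = (α - β) * (c (h x) * h x) := by
      intro x
      rw [← Finset.add_sum_erase _ _ (Finset.mem_univ x), hdiag x]
      rw [Finset.sum_congr rfl
        (fun y hy => by rw [hoff x y (Ne.symm (Finset.mem_erase.1 hy).1)])]
      have hsum : ∑ y ∈ Finset.univ.erase x, h y = - h x := by
        have h1 := Finset.add_sum_erase Finset.univ h (Finset.mem_univ x)
        rw [hh] at h1
        linear_combination h1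
      have e3 : ∑ y ∈ Finset.univ.erase x, (c (h x) * h y) * β
          = c (h x) * β * ∑ y ∈ Finset.univ.erase x, h y := by
        rw [Finset.mul_sum]
        exact Finset.sum_congr rfl fun y _ => by ring
      rw [e3, hsum]
      ring
    rw [Finset.sum_congr rfl (fun x _ => hx' x), ← Finset.mul_sum, hHc]
  -- real forms
  have hFr : F = ((∑ x, ‖f x‖ ^ 2 : ℝ) : ℂ) := by
    rw [hF]
    push_cast
    refine Finset.sum_congr rfl fun x _ => ?_
    rw [hc, Complex.mul_conj]
    norm_cast
    exact (Complex.sq_norm _).symm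
  have hHr : Hc = ((∑ x, ‖h x‖ ^ 2 : ℝ) : ℂ) := by
    rw [hHc]
    push_cast
    refine Finset.sum_congr rfl fun x _ => ?_
    rw [hc, mul_comm, Complex.mul_conj]
    norm_cast
    exact (Complex.sq_norm _).symm
  have hAr : ((∑ g, ‖A g‖ ^ 2 : ℝ) : ℂ) = ∑ g, A g * c (A g) := by
    push_cast
    refine Finset.sum_congr rfl fun g _ => ?_
    rw [hc, Complex.mul_conj]
    norm_cast
    exact Complex.sq_norm _
  have hAsum : (∑ g, ‖A g‖ ^ 2)
      = (Fintype.card G : ℝ) / ((n : ℝ) - 1) * (∑ x, ‖f x‖ ^ 2)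
        * (∑ x, ‖h x‖ ^ 2) := by
    have hc2 : ((∑ g, ‖A g‖ ^ 2 : ℝ) : ℂ)
        = (((Fintype.card G : ℝ) / ((n : ℝ) - 1) * (∑ x, ‖f x‖ ^ 2)
          * (∑ x, ‖h x‖ ^ 2) : ℝ) : ℂ) := by
      rw [hAr, hS, key, hFr, hHr]
      push_cast
      ring
    exact_mod_cast hc2
  -- rewrite the convolution inner product
  have hmain : (∑ x, (∑ g, μ g * f (g⁻¹ • x)) * c (h x)) = ∑ g, μ g * A g := by
    simp only [hA, Finset.sum_mul, Finset.mul_sum]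
    rw [Finset.sum_comm]
    exact Finset.sum_congr rfl fun g _ => Finset.sum_congr rfl fun x _ => by ring
  rw [hmain]
  have step1 : ‖∑ g, μ g * A g‖ ≤ ∑ g, ‖μ g‖ * ‖A g‖ := by
    refine le_trans (norm_sum_le _ _) ?_
    exact le_of_eq (Finset.sum_congr rfl fun g _ => norm_mul _ _)
  have step2 : ∑ g, ‖μ g‖ * ‖A g‖
      ≤ Real.sqrt (∑ g, ‖μ g‖ ^ 2) * Real.sqrt (∑ g, ‖A g‖ ^ 2) := by
    have csq := Finset.sum_mul_sq_le_sq_mul_sq Finset.univ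
      (fun g => ‖μ g‖) (fun g => ‖A g‖)
    have h0 : (0:ℝ) ≤ ∑ g, ‖μ g‖ * ‖A g‖ :=
      Finset.sum_nonneg fun g _ => mul_nonneg (norm_nonneg _) (norm_nonneg _)
    calc ∑ g, ‖μ g‖ * ‖A g‖
        = Real.sqrt ((∑ g, ‖μ g‖ * ‖A g‖) ^ 2) := (Real.sqrt_sq h0).symm
      _ ≤ Real.sqrt ((∑ g, ‖μ g‖ ^ 2) * (∑ g, ‖A g‖ ^ 2)) :=
          Real.sqrt_le_sqrt csq
      _ = _ := Real.sqrt_mul (Finset.sum_nonneg fun g _ => sq_nonneg _) _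
  have hnn : (0:ℝ) ≤ (Fintype.card G : ℝ) / ((n : ℝ) - 1) := by
    apply div_nonneg (Nat.cast_nonneg _)
    have : (2:ℝ) ≤ (n:ℝ) := by exact_mod_cast hX
    linarith
  have step3 : Real.sqrt (∑ g, ‖A g‖ ^ 2)
      = Real.sqrt ((Fintype.card G : ℝ) / ((n : ℝ) - 1))
        * Real.sqrt (∑ x, ‖f x‖ ^ 2) * Real.sqrt (∑ x, ‖h x‖ ^ 2) := by
    rw [hAsum, Real.sqrt_mul (mul_nonneg hnn (Finset.sum_nonneg fun x _ => sq_nonneg _)),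
      Real.sqrt_mul hnn]
  calc ‖∑ g, μ g * A g‖
      ≤ ∑ g, ‖μ g‖ * ‖A g‖ := step1
    _ ≤ Real.sqrt (∑ g, ‖μ g‖ ^ 2) * Real.sqrt (∑ g, ‖A g‖ ^ 2) := step2
    _ = _ := by rw [step3]; ring
end

section
/- Let ρ ∈ F_p be nonzero, and for b, c ∈ F_p define s(b,c) = [[−ρ⁻¹ c, −1 + ρ⁻¹ b c],[1, −b]] ∈ SL₂(F_p). Let B, C ⊆ F_p and S = { s(b,c) : b ∈ B, c ∈ C }. Then for any g₁, g₂ ∈ SL₂(F_p), the number of elements of S lying in g₁ B g₂, where B is the standard Borel subgroup of upper-triangular matrices in SL₂(F_p), is at most max(|B|, |C|). -/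
/-- Counting lemma: a nondegenerate bilinear equation `α + βb + γc + δbc = 0`
has at most `max |B| |C|` solutions in `B × C`. -/
lemma count_bilinear {K : Type*} [Field K] [DecidableEq K] (α β γ δ : K) (B C : Finset K)
    (h1 : δ ≠ 0 → α * δ - β * γ ≠ 0)
    (h2 : ¬(α = 0 ∧ β = 0 ∧ γ = 0 ∧ δ = 0)) :
    ((B ×ˢ C).filter (fun x : K × K => α + β * x.1 + γ * x.2 + δ * (x.1 * x.2) = 0)).card
      ≤ max B.card C.card := by
  by_cases hbd : β = 0 ∧ δ = 0
  · obtain ⟨hb, hd⟩ := hbd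
    by_cases hg : γ = 0
    · have ha : α ≠ 0 := fun h => h2 ⟨h, hb, hg, hd⟩
      rw [Finset.filter_false_of_mem]
      · simp
      · intro x hx
        simp [hb, hd, hg, ha]
    · refine le_trans (Finset.card_le_card_of_injOn Prod.fst
        (fun x hx => (Finset.mem_product.mp (Finset.mem_filter.mp hx).1).1) ?_)
        (le_max_left _ _)
      intro x hx y hy hxy
      have ex := (Finset.mem_filter.mp (Finset.mem_coe.mp hx)).2
      have ey := (Finset.mem_filter.mp (Finset.mem_coe.mp hy)).2
      have h2' : x.2 = y.2 := by
        have : γ * x.2 = γ * y.2 := by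
          linear_combination ex - ey - (x.1 - y.1) * hb - (x.1 * x.2 - y.1 * y.2) * hd
        exact mul_left_cancel₀ hg this
      exact Prod.ext hxy h2'
  · have key : ∀ x ∈ (B ×ˢ C).filter
        (fun x => α + β * x.1 + γ * x.2 + δ * (x.1 * x.2) = 0),
        β + δ * x.2 ≠ 0 := by
      intro x hx hcon
      have ex := (Finset.mem_filter.mp hx).2
      by_cases hδ : δ = 0
      · exact hbd ⟨by linear_combination hcon - x.2 * hδ, hδ⟩
      · exact (h1 hδ) (by linear_combination δ * ex - (γ + δ * x.1) * hcon)
    refine le_trans (Finset.card_le_card_of_injOn Prod.snd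
      (fun x hx => (Finset.mem_product.mp (Finset.mem_filter.mp hx).1).2) ?_)
      (le_max_right _ _)
    intro x hx y hy hxy
    have ex := (Finset.mem_filter.mp (Finset.mem_coe.mp hx)).2
    have ey := (Finset.mem_filter.mp (Finset.mem_coe.mp hy)).2
    have hz : (β + δ * x.2) * (x.1 - y.1) = 0 := by
      linear_combination ex - ey - (γ + δ * y.1) * hxy
    have h1' : x.1 = y.1 := by
      rcases mul_eq_zero.mp hz with h | h
      · exact absurd h (key x (Finset.mem_coe.mp hx))
      · exact sub_eq_zero.mp h
    exact Prod.ext h1' hxy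

/-- Characterization of membership in a Borel double coset via the vanishing
of a single matrix entry. -/
lemma borel_char {K : Type*} [Field K]
    (g₁ g₂ A₁ A₂ m : Matrix (Fin 2) (Fin 2) K)
    (h₁l : A₁ * g₁ = 1) (h₁r : g₁ * A₁ = 1)
    (h₂l : A₂ * g₂ = 1) (h₂r : g₂ * A₂ = 1)
    (hdg₁ : g₁.det = 1) (hdg₂ : g₂.det = 1) (hm : m.det = 1) :
    (∃ r q : K, r ≠ 0 ∧ m = g₁ * !![r, q; 0, r⁻¹] * g₂) ↔ (A₁ * m * A₂) 1 0 = 0 := by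
  constructor
  · rintro ⟨r, q, hr, rfl⟩
    have h : A₁ * (g₁ * !![r, q; 0, r⁻¹] * g₂) * A₂ = !![r, q; 0, r⁻¹] := by
      calc A₁ * (g₁ * !![r, q; 0, r⁻¹] * g₂) * A₂
          = (A₁ * g₁) * !![r, q; 0, r⁻¹] * (g₂ * A₂) := by noncomm_ring
        _ = !![r, q; 0, r⁻¹] := by rw [h₁l, h₂r, one_mul, mul_one]
    rw [h]
    simp
  · intro h
    set M := A₁ * m * A₂ with hM
    have dA₁ : A₁.det = 1 := by
      have := congrArg Matrix.det h₁r
      rw [Matrix.det_mul, hdg₁, one_mul, Matrix.det_one] at this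
      exact this
    have dA₂ : A₂.det = 1 := by
      have := congrArg Matrix.det h₂r
      rw [Matrix.det_mul, hdg₂, one_mul, Matrix.det_one] at this
      exact this
    have hdet : M.det = 1 := by
      rw [hM, Matrix.det_mul, Matrix.det_mul, dA₁, hm, dA₂]
      ring
    have e := Matrix.det_fin_two M
    rw [hdet, h] at e
    have h00 : M 0 0 * M 1 1 = 1 := by linear_combination -e
    have hr : M 0 0 ≠ 0 := left_ne_zero_of_mul_eq_one h00
    have h11 : M 1 1 = (M 0 0)⁻¹ := (inv_eq_of_mul_eq_one_right h00).symm
    have hMform : M = !![M 0 0, M 0 1; 0, (M 0 0)⁻¹] := by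
      rw [← h, ← h11]
      exact Matrix.eta_fin_two M
    have hmeq : m = g₁ * M * g₂ := by
      calc m = (g₁ * A₁) * m * (A₂ * g₂) := by rw [h₁r, h₂l, one_mul, mul_one]
        _ = g₁ * (A₁ * m * A₂) * g₂ := by noncomm_ring
    exact ⟨M 0 0, M 0 1, hr, hmeq.trans (by rw [← hMform])⟩

/-- Lemma 8, Borel case: at most `max(|B|,|C|)` elements of
`S = { [[-ρ⁻¹c, -1+ρ⁻¹bc],[1,-b]] : b ∈ B, c ∈ C }` lie in any double coset
`g₁ 𝔅 g₂` of the standard Borel subgroup of `SL₂(F_p)`. -/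
theorem borel_coset_intersection
    (p : ℕ) [Fact p.Prime] (ρ : ZMod p) (hρ : ρ ≠ 0)
    (B C : Finset (ZMod p))
    (g₁ g₂ : Matrix (Fin 2) (Fin 2) (ZMod p))
    (hg₁ : g₁.det = 1) (hg₂ : g₂.det = 1) :
    Set.ncard { m : Matrix (Fin 2) (Fin 2) (ZMod p) |
        (∃ b ∈ B, ∃ c ∈ C, m = !![-ρ⁻¹ * c, -1 + ρ⁻¹ * b * c; 1, -b]) ∧
        ∃ r q : ZMod p, r ≠ 0 ∧ m = g₁ * !![r, q; 0, r⁻¹] * g₂ } ≤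
      max B.card C.card := by
  obtain ⟨a₁, b₁, c₁, d₁, rfl⟩ : ∃ a b c d, g₁ = !![a, b; c, d] :=
    ⟨_, _, _, _, Matrix.eta_fin_two g₁⟩
  obtain ⟨a₂, b₂, c₂, d₂, rfl⟩ : ∃ a b c d, g₂ = !![a, b; c, d] :=
    ⟨_, _, _, _, Matrix.eta_fin_two g₂⟩
  have hdg₁ := hg₁
  have hdg₂ := hg₂
  rw [Matrix.det_fin_two_of] at hg₁ hg₂
  set A₁ : Matrix (Fin 2) (Fin 2) (ZMod p) := !![d₁, -b₁; -c₁, a₁] with hA₁def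
  set A₂ : Matrix (Fin 2) (Fin 2) (ZMod p) := !![d₂, -b₂; -c₂, a₂] with hA₂def
  have h₁l : A₁ * !![a₁, b₁; c₁, d₁] = 1 := by
    ext i j
    fin_cases i <;> fin_cases j <;>
      simp [hA₁def, Matrix.mul_apply, Fin.sum_univ_two, Matrix.one_apply] <;>
      first | linear_combination hg₁ | ring
  have h₁r : !![a₁, b₁; c₁, d₁] * A₁ = 1 := by
    ext i j
    fin_cases i <;> fin_cases j <;>
      simp [hA₁def, Matrix.mul_apply, Fin.sum_univ_two, Matrix.one_apply] <;>
      first | linear_combination hg₁ | ring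
  have h₂l : A₂ * !![a₂, b₂; c₂, d₂] = 1 := by
    ext i j
    fin_cases i <;> fin_cases j <;>
      simp [hA₂def, Matrix.mul_apply, Fin.sum_univ_two, Matrix.one_apply] <;>
      first | linear_combination hg₂ | ring
  have h₂r : !![a₂, b₂; c₂, d₂] * A₂ = 1 := by
    ext i j
    fin_cases i <;> fin_cases j <;>
      simp [hA₂def, Matrix.mul_apply, Fin.sum_univ_two, Matrix.one_apply] <;>
      first | linear_combination hg₂ | ring
  have hdets : ∀ b c : ZMod p,
      (!![-ρ⁻¹ * c, -1 + ρ⁻¹ * b * c; 1, -b] : Matrix (Fin 2) (Fin 2) (ZMod p)).det = 1 := by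
    intro b c
    rw [Matrix.det_fin_two_of]
    ring
  have hentry : ∀ b c : ZMod p,
      (A₁ * !![-ρ⁻¹ * c, -1 + ρ⁻¹ * b * c; 1, -b] * A₂) 1 0 =
        (a₁ * d₂ - c₁ * c₂) + (a₁ * c₂) * b + (c₁ * ρ⁻¹ * d₂) * c
          + (c₁ * ρ⁻¹ * c₂) * (b * c) := by
    intro b c
    simp [hA₁def, hA₂def, Matrix.mul_apply, Fin.sum_univ_two]
    ring
  have hset : { m : Matrix (Fin 2) (Fin 2) (ZMod p) |
        (∃ b ∈ B, ∃ c ∈ C, m = !![-ρ⁻¹ * c, -1 + ρ⁻¹ * b * c; 1, -b]) ∧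
        ∃ r q : ZMod p, r ≠ 0 ∧ m = !![a₁, b₁; c₁, d₁] * !![r, q; 0, r⁻¹] * !![a₂, b₂; c₂, d₂] }
      = ↑(((B ×ˢ C).filter (fun x => (a₁ * d₂ - c₁ * c₂) + (a₁ * c₂) * x.1
            + (c₁ * ρ⁻¹ * d₂) * x.2 + (c₁ * ρ⁻¹ * c₂) * (x.1 * x.2) = 0)).image
          (fun x => !![-ρ⁻¹ * x.2, -1 + ρ⁻¹ * x.1 * x.2; 1, -x.1])) := by
    ext m
    simp only [Set.mem_setOf_eq, Finset.coe_image, Set.mem_image, Finset.mem_coe,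
      Finset.mem_filter, Finset.mem_product]
    constructor
    · rintro ⟨⟨b, hb, c, hc, rfl⟩, hbor⟩
      refine ⟨(b, c), ⟨⟨hb, hc⟩, ?_⟩, rfl⟩
      rw [← hentry b c]
      exact (borel_char _ _ A₁ A₂ _ h₁l h₁r h₂l h₂r hdg₁ hdg₂ (hdets b c)).mp hbor
    · rintro ⟨⟨b, c⟩, ⟨⟨hb, hc⟩, hP⟩, rfl⟩
      refine ⟨⟨b, hb, c, hc, rfl⟩, ?_⟩
      refine (borel_char _ _ A₁ A₂ _ h₁l h₁r h₂l h₂r hdg₁ hdg₂ (hdets b c)).mpr ?_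
      rw [hentry b c]
      exact hP
  rw [hset, Set.ncard_coe_finset]
  refine le_trans Finset.card_image_le ?_
  refine count_bilinear _ _ _ _ B C ?_ ?_
  · intro hδ
    have hc₁ : c₁ ≠ 0 := fun h => hδ (by simp [h])
    have hc₂ : c₂ ≠ 0 := fun h => hδ (by simp [h])
    have : (a₁ * d₂ - c₁ * c₂) * (c₁ * ρ⁻¹ * c₂) - (a₁ * c₂) * (c₁ * ρ⁻¹ * d₂)
        = -(c₁ * c₂) ^ 2 * ρ⁻¹ := by ring
    rw [this]
    exact mul_ne_zero (neg_ne_zero.mpr (pow_ne_zero _ (mul_ne_zero hc₁ hc₂)))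
      (inv_ne_zero hρ)
  · rintro ⟨hA, hB, hC, hD⟩
    have hρ' : ρ⁻¹ ≠ 0 := inv_ne_zero hρ
    have hcd : d₂ = 0 ∧ c₂ = 0 := by
      by_cases hc1 : c₁ = 0
      · have ha₁ : a₁ ≠ 0 := left_ne_zero_of_mul_eq_one
          (show a₁ * d₁ = 1 by linear_combination hg₁ + b₁ * hc1)
        have hc2 : c₂ = 0 := (mul_eq_zero.mp hB).resolve_left ha₁
        have hd2 : d₂ = 0 := by
          have : a₁ * d₂ = 0 := by linear_combination hA + c₂ * hc1
          exact (mul_eq_zero.mp this).resolve_left ha₁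
        exact ⟨hd2, hc2⟩
      · have hne : c₁ * ρ⁻¹ ≠ 0 := mul_ne_zero hc1 hρ'
        exact ⟨(mul_eq_zero.mp hC).resolve_left hne,
          (mul_eq_zero.mp hD).resolve_left hne⟩
    have : (0 : ZMod p) = 1 := by
      linear_combination hg₂ - a₂ * hcd.1 + b₂ * hcd.2
    exact zero_ne_one this
end

section
/- Let ε ∈ F_p be a non-square and K_ε = { [[u, εv],[v, u]] : u² − εv² = 1 }. Let ρ ≠ 0 and S = { [[−ρ⁻¹c, −1+ρ⁻¹bc],[1, −b]] : b ∈ B, c ∈ C } for subsets B, C ⊆ F_p. Then for any g, g' ∈ SL₂(F_p), |g K_ε g' ∩ S| ≤ 2. -/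
open Polynomial

lemma quad_ncard_le {K : Type*} [Field K] (c2 c1 c0 : K) (h2 : c2 ≠ 0) :
    {x : K | c2 * x ^ 2 + c1 * x + c0 = 0}.ncard ≤ 2 := by
  classical
  set q : K[X] := C c2 * X ^ 2 + C c1 * X + C c0 with hq
  have hq0 : q ≠ 0 := by
    intro h
    have h4 : q.coeff 2 = c2 := by simp [hq, coeff_C]
    rw [h] at h4
    simp at h4
    exact h2 h4.symm
  have hset : {x : K | c2 * x ^ 2 + c1 * x + c0 = 0} = ↑q.roots.toFinset := by
    ext x
    simp [hq, Polynomial.mem_roots, hq0, IsRoot.def]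
    exact fun _ => hq0
  rw [hset, Set.ncard_coe_finset]
  calc q.roots.toFinset.card ≤ Multiset.card q.roots := Multiset.toFinset_card_le _
    _ ≤ q.natDegree := Polynomial.card_roots' q
    _ ≤ 2 := le_of_eq (Polynomial.natDegree_quadratic h2)

/-- Lemma 8, `K_ε` case: at most `2` elements of
`S = { [[-ρ⁻¹c, -1+ρ⁻¹bc],[1,-b]] : b ∈ B, c ∈ C }` lie in any double coset
`g K_ε g'`, where `K_ε = { [[u,εv],[v,u]] : u² - εv² = 1 }` for a non-square `ε`. -/
theorem Keps_coset_intersection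
    (p : ℕ) [Fact p.Prime] (hp : p ≠ 2)
    (ε : ZMod p) (hε : ¬ IsSquare ε)
    (ρ : ZMod p) (hρ : ρ ≠ 0)
    (B C : Set (ZMod p))
    (g g' : Matrix (Fin 2) (Fin 2) (ZMod p))
    (hg : g.det = 1) (hg' : g'.det = 1) :
    Set.ncard { m : Matrix (Fin 2) (Fin 2) (ZMod p) |
        (∃ b ∈ B, ∃ c ∈ C, m = !![-ρ⁻¹ * c, -1 + ρ⁻¹ * b * c; 1, -b]) ∧
        ∃ u v : ZMod p, u ^ 2 - ε * v ^ 2 = 1 ∧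
          m = g * !![u, ε * v; v, u] * g' } ≤ 2 := by
  classical
  set a : ZMod p := g 1 0 * g' 0 0 + g 1 1 * g' 1 0 with ha_def
  set bb : ZMod p := g 1 1 * g' 0 0 + ε * (g 1 0 * g' 1 0) with hb_def
  set t : Set (ZMod p × ZMod p) :=
    {x | x.1 ^ 2 - ε * x.2 ^ 2 = 1 ∧ a * x.1 + bb * x.2 = 1} with ht_def
  have hginv : g⁻¹ * g = 1 := Matrix.nonsing_inv_mul g (by rw [hg]; exact isUnit_one)
  have hg'inv : g' * g'⁻¹ = 1 := Matrix.mul_nonsing_inv g' (by rw [hg']; exact isUnit_one)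
  have hcancel : ∀ u v : ZMod p,
      g⁻¹ * (g * !![u, ε * v; v, u] * g') * g'⁻¹ = !![u, ε * v; v, u] := by
    intro u v
    have : g⁻¹ * (g * !![u, ε * v; v, u] * g') * g'⁻¹
        = (g⁻¹ * g) * !![u, ε * v; v, u] * (g' * g'⁻¹) := by
      noncomm_ring
    rw [this, hginv, hg'inv, Matrix.one_mul, Matrix.mul_one]
  have hentry : ∀ u v : ZMod p, (g * !![u, ε * v; v, u] * g') 1 0 = a * u + bb * v := by
    intro u v
    simp [Matrix.mul_apply, Fin.sum_univ_two, ha_def, hb_def]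
    ring
  -- injection into t
  have hmain : Set.ncard { m : Matrix (Fin 2) (Fin 2) (ZMod p) |
        (∃ b ∈ B, ∃ c ∈ C, m = !![-ρ⁻¹ * c, -1 + ρ⁻¹ * b * c; 1, -b]) ∧
        ∃ u v : ZMod p, u ^ 2 - ε * v ^ 2 = 1 ∧
          m = g * !![u, ε * v; v, u] * g' } ≤ t.ncard := by
    apply Set.ncard_le_ncard_of_injOn
      (fun m => ((g⁻¹ * m * g'⁻¹) 0 0, (g⁻¹ * m * g'⁻¹) 1 0))
    · rintro m ⟨⟨b, hb, c, hc, hm⟩, u, v, huv, hK⟩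
      have hk : g⁻¹ * m * g'⁻¹ = !![u, ε * v; v, u] := by rw [hK]; exact hcancel u v
      have h10 : m 1 0 = 1 := by rw [hm]; simp
      have h10' : a * u + bb * v = 1 := by rw [← hentry u v, ← hK, h10]
      show ((g⁻¹ * m * g'⁻¹) 0 0, (g⁻¹ * m * g'⁻¹) 1 0) ∈ t
      have h5 : ((g⁻¹ * m * g'⁻¹) 0 0, (g⁻¹ * m * g'⁻¹) 1 0) = (u, v) := by
        rw [hk]; simp
      rw [h5, ht_def]
      exact ⟨huv, h10'⟩
    · rintro m₁ ⟨_, u₁, v₁, _, hK₁⟩ m₂ ⟨_, u₂, v₂, _, hK₂⟩ hf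
      have hk₁ : g⁻¹ * m₁ * g'⁻¹ = !![u₁, ε * v₁; v₁, u₁] := by rw [hK₁]; exact hcancel _ _
      have hk₂ : g⁻¹ * m₂ * g'⁻¹ = !![u₂, ε * v₂; v₂, u₂] := by rw [hK₂]; exact hcancel _ _
      have hf' : ((g⁻¹ * m₁ * g'⁻¹) 0 0, (g⁻¹ * m₁ * g'⁻¹) 1 0)
          = ((g⁻¹ * m₂ * g'⁻¹) 0 0, (g⁻¹ * m₂ * g'⁻¹) 1 0) := hf
      clear hf
      rename' hf' => hf
      rw [hk₁, hk₂] at hf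
      have e1 : u₁ = u₂ := by simpa using congrArg Prod.fst hf
      have e2 : v₁ = v₂ := by simpa using congrArg Prod.snd hf
      rw [hK₁, hK₂, e1, e2]
  refine hmain.trans ?_
  -- now bound t
  by_cases ha : a = 0
  · by_cases hb : bb = 0
    · have : t = ∅ := by
        ext ⟨u, v⟩
        simp only [ht_def, Set.mem_setOf_eq, ha, hb, Set.mem_empty_iff_false, iff_false]
        rintro ⟨-, h⟩
        simp at h
      simp [this]
    · -- a = 0, b ≠ 0 : v = b⁻¹, u² = 1 + ε b⁻²
      have hsub : Set.ncard t ≤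
          Set.ncard {x : ZMod p | 1 * x ^ 2 + 0 * x + (-ε * bb⁻¹ ^ 2 - 1) = 0} := by
        apply Set.ncard_le_ncard_of_injOn Prod.fst
        · rintro ⟨u, v⟩ ⟨h1, h2⟩
          rw [ha, zero_mul, zero_add] at h2
          have hv : v = bb⁻¹ := eq_inv_of_mul_eq_one_left (by linear_combination h2)
          simp only [Set.mem_setOf_eq]
          rw [hv] at h1
          simp only at h1
          linear_combination h1
        · rintro ⟨u₁, v₁⟩ ⟨h1, h2⟩ ⟨u₂, v₂⟩ ⟨h3, h4⟩ hf
          simp only at hf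
          rw [ha, zero_mul, zero_add] at h2 h4
          have : v₁ = v₂ := by
            have e1 : v₁ = bb⁻¹ := eq_inv_of_mul_eq_one_left (by linear_combination h2)
            have e2 : v₂ = bb⁻¹ := eq_inv_of_mul_eq_one_left (by linear_combination h4)
            rw [e1, e2]
          simp [Prod.ext_iff, hf, this]
      exact hsub.trans (quad_ncard_le 1 0 _ one_ne_zero)
  · -- a ≠ 0
    have hc2 : bb ^ 2 - ε * a ^ 2 ≠ 0 := by
      intro h
      apply hε
      refine ⟨bb * a⁻¹, ?_⟩
      field_simp
      linear_combination -h
    have hsub : Set.ncard t ≤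
        Set.ncard {x : ZMod p |
          (bb ^ 2 - ε * a ^ 2) * x ^ 2 + (-2 * bb) * x + (1 - a ^ 2) = 0} := by
      apply Set.ncard_le_ncard_of_injOn Prod.snd
      · rintro ⟨u, v⟩ ⟨h1, h2⟩
        simp only [Set.mem_setOf_eq]
        linear_combination a ^ 2 * h1 + (bb * v - 1 - a * u) * h2
      · rintro ⟨u₁, v₁⟩ ⟨h1, h2⟩ ⟨u₂, v₂⟩ ⟨h3, h4⟩ hf
        simp only at hf
        have : u₁ = u₂ := by
          have e : a * u₁ = a * u₂ := by rw [hf] at h2; linear_combination h2 - h4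
          exact mul_left_cancel₀ ha e
        simp [Prod.ext_iff, hf, this]
    exact hsub.trans (quad_ncard_le _ _ _ hc2)
end

section
/- The matrices u = [[1,2],[0,1]] and v = [[1,0],[2,1]] generate a free subgroup of SL₂(ℤ) of rank 2. -/
/-!
Sanov's ping-pong argument. Write `t = v 0 / v 1 ∈ ℚ ∪ {∞}` for the slope of a nonzero integer
vector `v`. Then `u` acts by `t ↦ t + 2` and `v` by `1/t ↦ 1/t + 2`, so with the four disjoint arcs
`X 0 = [1, ∞]`, `X 1 = [0, 1)`, `Y 0 = (-∞, -1)`, `Y 1 = [-1, 0)` each generator `g` maps the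
complement of its `Y` into its `X`, and `g⁻¹` the complement of its `X` into its `Y`; the ping-pong
lemma `FreeGroup.injective_lift_of_ping_pong` applied to the action on nonzero vectors concludes.
-/

open Matrix MatrixGroups Pointwise
open scoped Function

lemma RayVector.smul_compl_preimage_subset {R G M : Type*} [AddCommMonoid M] [Group G]
    [DistribMulAction G M] {g : G} {S T : Set M} (h : ∀ v : M, v ≠ 0 → v ∉ S → g • v ∈ T) :
    g • (((↑) : RayVector R M → M) ⁻¹' S)ᶜ ⊆ (↑) ⁻¹' T :=
  Set.smul_set_subset_iff.2 fun p hp => h p (RayVector.equiv R M p).2 hp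

lemma sq_add_sq_pos_of_ne_zero {R : Type*} [CommRing R] [LinearOrder R] [IsStrictOrderedRing R]
    {v : Fin 2 → R} (hv : v ≠ 0) : 0 < v 0 ^ 2 + v 1 ^ 2 := by
  have h := (dotProduct_self_eq_zero (v := v)).not.2 hv
  simp only [dotProduct, Fin.sum_univ_two, ← sq] at h
  exact lt_of_le_of_ne (by positivity) (Ne.symm h)

namespace Sanov

variable (R : Type*) [CommRing R] [LinearOrder R] [IsStrictOrderedRing R]

/- The slope arcs of the header with denominators cleared by `v 1 ^ 2`; `v 1 = 0` lies in `X 0`. -/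
def X : Fin 2 → Set (Fin 2 → R) :=
  ![{v | v 1 ^ 2 ≤ v 0 * v 1}, {v | 0 ≤ v 0 * v 1 ∧ v 0 * v 1 < v 1 ^ 2}]

def Y : Fin 2 → Set (Fin 2 → R) :=
  ![{v | v 0 * v 1 < -v 1 ^ 2}, {v | -v 1 ^ 2 ≤ v 0 * v 1 ∧ v 0 * v 1 < 0}]

lemma preimage_coe_X_nonempty (i : Fin 2) :
    (((↑) : RayVector R (Fin 2 → R) → Fin 2 → R) ⁻¹' X R i).Nonempty := by
  fin_cases i
  · exact ⟨(RayVector.equiv R _).symm ⟨![1, 0], by simp⟩, by simp [X]⟩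
  · exact ⟨(RayVector.equiv R _).symm ⟨![0, 1], by simp⟩, by simp [X]⟩

lemma pairwise_disjoint_X : Pairwise (Disjoint on X R) := by
  intro i j hij
  rw [Function.onFun, Set.disjoint_left]
  intro v hi hj
  fin_cases i <;> fin_cases j <;> simp_all [X] <;> linarith

lemma pairwise_disjoint_Y : Pairwise (Disjoint on Y R) := by
  intro i j hij
  rw [Function.onFun, Set.disjoint_left]
  intro v hi hj
  fin_cases i <;> fin_cases j <;> simp_all [Y] <;> linarith

lemma disjoint_X_Y (i j : Fin 2) : Disjoint (X R i) (Y R j) := by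
  rw [Set.disjoint_left]
  intro v hX hY
  have := sq_nonneg (v 1)
  fin_cases i <;> fin_cases j <;> simp [X, Y] at hX hY <;> linarith

variable {R}

lemma mulVec_mem_X_zero {v : Fin 2 → R} (hv : v ∉ Y R 0) : !![1, 2; 0, 1] *ᵥ v ∈ X R 0 := by
  simp [X, Y, dotProduct, Fin.sum_univ_two] at hv ⊢
  linarith

lemma mulVec_mem_Y_zero {v : Fin 2 → R} (hv : v ∉ X R 0) : !![1, -2; 0, 1] *ᵥ v ∈ Y R 0 := by
  simp [X, Y, dotProduct, Fin.sum_univ_two] at hv ⊢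
  linarith

lemma mulVec_mem_X_one {v : Fin 2 → R} (hv₀ : v ≠ 0) (hv : v ∉ Y R 1) :
    !![1, 0; 2, 1] *ᵥ v ∈ X R 1 := by
  have hpos := sq_add_sq_pos_of_ne_zero hv₀
  simp [X, Y, dotProduct, Fin.sum_univ_two] at hv ⊢
  rcases le_or_gt 0 (v 0 * v 1) with hxy | hxy
  · constructor <;> nlinarith
  · have hlt : v 0 * v 1 < -v 1 ^ 2 := lt_of_not_ge fun h => (hv h).not_gt hxy
    constructor <;> nlinarith [sq_nonneg (v 0 + v 1), sq_nonneg (v 1), sq_nonneg (v 0)]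

lemma mulVec_mem_Y_one {v : Fin 2 → R} (hv₀ : v ≠ 0) (hv : v ∉ X R 1) :
    !![1, 0; -2, 1] *ᵥ v ∈ Y R 1 := by
  have hpos := sq_add_sq_pos_of_ne_zero hv₀
  simp [X, Y, dotProduct, Fin.sum_univ_two] at hv ⊢
  rcases lt_or_ge (v 0 * v 1) 0 with hxy | hxy
  · constructor <;> nlinarith
  · have hle := hv hxy
    constructor <;> nlinarith [sq_nonneg (v 0 - v 1), sq_nonneg (v 1), sq_nonneg (v 0)]

end Sanov

open Sanov

/-- `u = [[1,2],[0,1]]` and `v = [[1,0],[2,1]]` generate a free subgroup of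
`SL₂(ℤ)` of rank 2: the induced homomorphism from the free group on two
generators is injective. -/
theorem u_v_generate_free_group
    (u v : Matrix.SpecialLinearGroup (Fin 2) ℤ)
    (hu : (u : Matrix (Fin 2) (Fin 2) ℤ) = !![1, 2; 0, 1])
    (hv : (v : Matrix (Fin 2) (Fin 2) ℤ) = !![1, 0; 2, 1]) :
    Function.Injective
      ⇑(FreeGroup.lift (![u, v] : Fin 2 → Matrix.SpecialLinearGroup (Fin 2) ℤ)) := by
  let coe : RayVector ℤ (Fin 2 → ℤ) → Fin 2 → ℤ := (↑)
  refine FreeGroup.injective_lift_of_ping_pong _ (fun i => coe ⁻¹' X ℤ i) (fun i => coe ⁻¹' Y ℤ i)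
    (preimage_coe_X_nonempty ℤ) ((pairwise_disjoint_X ℤ).mono fun _ _ h => h.preimage coe)
    ((pairwise_disjoint_Y ℤ).mono fun _ _ h => h.preimage coe)
    (fun i j => (disjoint_X_Y ℤ i j).preimage coe) ?_ ?_
  all_goals refine Fin.forall_fin_two.2 ⟨RayVector.smul_compl_preimage_subset fun w hw₀ hw => ?_,
    RayVector.smul_compl_preimage_subset fun w hw₀ hw => ?_⟩
  all_goals simp only [cons_val_zero, cons_val_one, Pi.inv_apply, smul_eq_mulVec,
    Matrix.SpecialLinearGroup.smul_def, Matrix.SpecialLinearGroup.coe_inv, adjugate_fin_two_of, hu, hv]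
  · exact mulVec_mem_X_zero hw
  · exact mulVec_mem_X_one hw₀ hw
  · simpa using mulVec_mem_Y_zero hw
  · simpa using mulVec_mem_Y_one hw₀ hw
end

section
/- Let G be a finite group acting simply 3-transitively on a finite set X (for each pair of triples of distinct points there is exactly one g mapping one to the other componentwise). Let W ⊆ X and let mu be a probability measure on G with max value ‖mu‖_∞. Then either ∑_{g} mu(g) |W ∩ gW| < 4 or ∑_{g} mu(g) |W ∩ gW| ≤ 2 ‖mu‖_∞^{1/3} |W|². -/
/-!
Write `n_g = |W ∩ gW|` and `S = ∑ μ(g) n_g`. Only the identity fixes three distinct points, so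
`(g, t) ↦ (g⁻¹ • t, t)` is injective on pairs of `g` and an injective triple `t` in `W ∩ gW`,
with values in `W³ × W³`; hence `∑_g n_g(n_g - 1)(n_g - 2) ≤ |W|⁶`. If `S ≥ 4`, then
`S / 2 ≤ S - 2 ≤ ∑ μ(g) (n_g - 2)₊`, and Jensen's inequality for `x ↦ x³` gives
`(S / 2)³ ≤ ∑ μ(g) (n_g - 2)₊³ ≤ ‖μ‖_∞ ∑ n_g(n_g - 1)(n_g - 2) ≤ ‖μ‖_∞ |W|⁶`.
-/

open Finset

section FixedTuples

variable {G X : Type*} [Group G] [MulAction G X] {k : ℕ}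

theorem eq_of_forall_inv_smul_eq
    (hfix : ∀ (g : G) (x : Fin k ↪ X), (∀ i, g • x i = x i) → g = 1) {g h : G}
    (x : Fin k ↪ X) (hx : ∀ i, g⁻¹ • x i = h⁻¹ • x i) : g = h := by
  refine (mul_inv_eq_one.mp (hfix (h * g⁻¹) x fun i => ?_)).symm
  rw [mul_smul, hx, smul_inv_smul]

theorem inv_smul_mem_of_mem_inter_image_smul [DecidableEq X] {W : Finset X} {g : G} {x : X}
    (hx : x ∈ W ∩ W.image (g • ·)) : g⁻¹ • x ∈ W := by
  obtain ⟨w, hw, rfl⟩ := mem_image.mp (mem_inter.mp hx).2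
  rwa [inv_smul_smul]

theorem sum_descFactorial_card_inter_image_smul_le [Fintype G] [DecidableEq X]
    (hfix : ∀ (g : G) (x : Fin k ↪ X), (∀ i, g • x i = x i) → g = 1) (W : Finset X) :
    ∑ g : G, (#(W ∩ W.image (g • ·))).descFactorial k ≤ #W ^ k * #W ^ k := by
  let pairs : (Σ g : G, Fin k ↪ ↥(W ∩ W.image (g • ·))) → (Fin k → X) × (Fin k → X) :=
    fun p => (fun i => p.1⁻¹ • (p.2 i : X), fun i => p.2 i)
  have hmaps : ∀ p ∈ univ,
      pairs p ∈ Fintype.piFinset (fun _ => W) ×ˢ Fintype.piFinset (fun _ => W) := by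
    rintro ⟨g, x⟩ -
    simp only [pairs, mem_product, Fintype.mem_piFinset]
    exact ⟨fun i => inv_smul_mem_of_mem_inter_image_smul (x i).2,
      fun i => (mem_inter.mp (x i).2).1⟩
  have hinj : Function.Injective pairs := by
    rintro ⟨g, x⟩ ⟨h, y⟩ hxy
    simp only [pairs, Prod.mk.injEq, funext_iff] at hxy
    obtain ⟨hinv, hval⟩ := hxy
    obtain rfl : g = h := eq_of_forall_inv_smul_eq hfix (x.trans (Function.Embedding.subtype _))
      fun i => by simpa [hval i] using hinv i
    obtain rfl : x = y := DFunLike.ext _ _ fun i => Subtype.ext (hval i)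
    rfl
  calc ∑ g : G, (#(W ∩ W.image (g • ·))).descFactorial k
      = Fintype.card (Σ g : G, Fin k ↪ ↥(W ∩ W.image (g • ·))) := by
        simp [Fintype.card_sigma, Fintype.card_embedding_eq]
    _ ≤ #W ^ k * #W ^ k := by
        simpa using card_le_card_of_injOn pairs hmaps hinj.injOn

theorem eq_one_of_forall_smul_eq_of_existsUnique
    (h3t : ∀ x₁ x₂ x₃ y₁ y₂ y₃ : X,
      x₁ ≠ x₂ → x₁ ≠ x₃ → x₂ ≠ x₃ → y₁ ≠ y₂ → y₁ ≠ y₃ → y₂ ≠ y₃ →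
      ∃! g : G, g • x₁ = y₁ ∧ g • x₂ = y₂ ∧ g • x₃ = y₃)
    (g : G) (x : Fin 3 ↪ X) (hg : ∀ i, g • x i = x i) : g = 1 := by
  have h01 : x 0 ≠ x 1 := x.injective.ne (by decide)
  have h02 : x 0 ≠ x 2 := x.injective.ne (by decide)
  have h12 : x 1 ≠ x 2 := x.injective.ne (by decide)
  exact (h3t _ _ _ _ _ _ h01 h02 h12 h01 h02 h12).unique ⟨hg 0, hg 1, hg 2⟩ (by simp)

end FixedTuples

theorem natCast_sub_le_natCast_tsub (n c : ℕ) : (n : ℝ) - c ≤ ((n - c : ℕ) : ℝ) := by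
  rcases le_total c n with h | h
  · rw [Nat.cast_sub h]
  · simp [Nat.sub_eq_zero_of_le h, h]

theorem pow_sub_le_iSup_mul_sum_pow {ι : Type*} [Fintype ι] {μ : ι → ℝ} (hμ0 : ∀ i, 0 ≤ μ i)
    (hμ1 : ∑ i, μ i = 1) (f : ι → ℕ) {c : ℕ} (hc : (c : ℝ) ≤ ∑ i, μ i * f i) (k : ℕ) :
    (∑ i, μ i * f i - c) ^ k ≤ (⨆ i, μ i) * ∑ i, ((f i - c : ℕ) : ℝ) ^ k := by
  have hsub : ∑ i, μ i * f i - c ≤ ∑ i, μ i * ((f i - c : ℕ) : ℝ) :=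
    calc ∑ i, μ i * f i - c = ∑ i, μ i * ((f i : ℝ) - c) := by
          simp only [mul_sub, sum_sub_distrib, ← sum_mul, hμ1, one_mul]
      _ ≤ _ := sum_le_sum fun i _ =>
          mul_le_mul_of_nonneg_left (natCast_sub_le_natCast_tsub _ _) (hμ0 i)
  calc (∑ i, μ i * f i - c) ^ k ≤ (∑ i, μ i * ((f i - c : ℕ) : ℝ)) ^ k :=
        pow_le_pow_left₀ (sub_nonneg.2 hc) hsub k
    _ ≤ ∑ i, μ i * ((f i - c : ℕ) : ℝ) ^ k :=
        Real.pow_arith_mean_le_arith_mean_pow univ _ _ (fun i _ => hμ0 i) hμ1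
          (fun i _ => Nat.cast_nonneg _) k
    _ ≤ ∑ i, (⨆ i, μ i) * ((f i - c : ℕ) : ℝ) ^ k := sum_le_sum fun i _ =>
        mul_le_mul_of_nonneg_right (le_ciSup (Set.finite_range μ).bddAbove i) (by positivity)
    _ = (⨆ i, μ i) * ∑ i, ((f i - c : ℕ) : ℝ) ^ k := (mul_sum ..).symm

theorem le_rpow_one_div_mul_of_pow_le_mul_pow {a b M : ℝ} {k : ℕ} (hk : k ≠ 0) (hb : 0 ≤ b)
    (hM : 0 ≤ M) (h : a ^ k ≤ M * b ^ k) : a ≤ M ^ (1 / (k : ℝ)) * b := by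
  refine le_of_pow_le_pow_left₀ hk (by positivity) ?_
  rwa [mul_pow, one_div, Real.rpow_inv_natCast_pow hM hk]

theorem popular_intersection_bound_general
    {G X : Type*} [Group G] [Fintype G] [DecidableEq X]
    [MulAction G X]
    (h3t : ∀ x₁ x₂ x₃ y₁ y₂ y₃ : X,
      x₁ ≠ x₂ → x₁ ≠ x₃ → x₂ ≠ x₃ → y₁ ≠ y₂ → y₁ ≠ y₃ → y₂ ≠ y₃ →
      ∃! g : G, g • x₁ = y₁ ∧ g • x₂ = y₂ ∧ g • x₃ = y₃)
    (μ : G → ℝ) (hμ0 : ∀ g, 0 ≤ μ g) (hμ1 : ∑ g, μ g = 1)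
    (W : Finset X) :
    (∑ g : G, μ g * ((W ∩ W.image (fun w => g • w)).card : ℝ)) < 4 ∨
      (∑ g : G, μ g * ((W ∩ W.image (fun w => g • w)).card : ℝ)) ≤
        2 * (⨆ g : G, μ g) ^ ((1 : ℝ) / 3) * (W.card : ℝ) ^ 2 := by
  set S := ∑ g : G, μ g * ((W ∩ W.image (fun w => g • w)).card : ℝ)
  refine (lt_or_ge S 4).imp id fun hS => ?_
  have hM0 : 0 ≤ ⨆ g, μ g := (hμ0 1).trans (le_ciSup (Set.finite_range μ).bddAbove 1)
  have hcount : ∑ g : G, ((W ∩ W.image (g • ·)).card - 2) ^ 3 ≤ W.card ^ 3 * W.card ^ 3 :=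
    (sum_le_sum fun g _ => by simpa using Nat.pow_sub_le_descFactorial _ 3).trans
      (sum_descFactorial_card_inter_image_smul_le (eq_one_of_forall_smul_eq_of_existsUnique h3t) W)
  have hcube : (S / 2) ^ 3 ≤ (⨆ g, μ g) * ((W.card : ℝ) ^ 2) ^ 3 :=
    calc (S / 2) ^ 3 ≤ (S - 2) ^ 3 := pow_le_pow_left₀ (by linarith) (by linarith) 3
      _ ≤ (⨆ g, μ g) * ∑ g : G, (((W ∩ W.image (g • ·)).card - 2 : ℕ) : ℝ) ^ 3 :=
        mod_cast pow_sub_le_iSup_mul_sum_pow hμ0 hμ1 _ (by push_cast; linarith) 3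
      _ ≤ (⨆ g, μ g) * ((W.card : ℝ) ^ 3 * (W.card : ℝ) ^ 3) :=
        mul_le_mul_of_nonneg_left (mod_cast hcount) hM0
      _ = (⨆ g, μ g) * ((W.card : ℝ) ^ 2) ^ 3 := by ring
  have hroot : S / 2 ≤ (⨆ g, μ g) ^ ((1 : ℝ) / 3) * (W.card : ℝ) ^ 2 := by
    simpa using le_rpow_one_div_mul_of_pow_le_mul_pow three_ne_zero (by positivity) hM0 hcube
  linarith

/-- Theorem 4 (first part): if a finite group `G` acts simply 3-transitively
on a finite set `X`, `W ⊆ X`, and `μ` is a probability measure on `G`, then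
either `∑_g μ(g)|W ∩ gW| < 4` or `∑_g μ(g)|W ∩ gW| ≤ 2‖μ‖_∞^{1/3}|W|²`. -/
theorem popular_intersection_bound
    {G X : Type*} [Group G] [Fintype G] [Fintype X] [DecidableEq X]
    [MulAction G X]
    (h3t : ∀ x₁ x₂ x₃ y₁ y₂ y₃ : X,
      x₁ ≠ x₂ → x₁ ≠ x₃ → x₂ ≠ x₃ → y₁ ≠ y₂ → y₁ ≠ y₃ → y₂ ≠ y₃ →
      ∃! g : G, g • x₁ = y₁ ∧ g • x₂ = y₂ ∧ g • x₃ = y₃)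
    (μ : G → ℝ) (hμ0 : ∀ g, 0 ≤ μ g) (hμ1 : ∑ g, μ g = 1)
    (W : Finset X) :
    (∑ g : G, μ g * ((W ∩ W.image (fun w => g • w)).card : ℝ)) < 4 ∨
      (∑ g : G, μ g * ((W ∩ W.image (fun w => g • w)).card : ℝ)) ≤
        2 * (⨆ g : G, μ g) ^ ((1 : ℝ) / 3) * (W.card : ℝ) ^ 2 :=
  popular_intersection_bound_general h3t μ hμ0 hμ1 W
end
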